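/- Let (X,d,μ) be a doubling metric measure space with property (M), uniformly b-connected for some b ≤ 1/4, fix a basepoint x₀ and set φ(t) = inf{r > 0 : μ(B(x₀,r)) ≥ t}. Suppose X has a strong profile: there is C ≥ 1 with μ(∂₂A) ≥ C⁻¹ μ(A)/φ(C μ(A)) for every measurable A of finite positive measure. Then connected subsets are asymptotically isoperimetric: I^↓_{C,2} ≈ I₂, i.e. there exist constants C₁, C₂ > 0 such that I^↓_{C,2}(t) ≤ C₁ I₂(C₂ t) for all t > 0 (the converse inequality I₂ ≤ I^↓_{C,2} being automatic). -/

import Mathlib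

open Metric MeasureTheory Set ENNReal NNReal

noncomputable section

/-- The closed `h`-neighborhood `A_h = {x : d(x,A) ≤ h}` of a set `A`. -/
def nbhd {X : Type*} [MetricSpace X] (A : Set X) (h : ℝ) : Set X :=
  {x | Metric.infDist x A ≤ h}

/-- The `h`-boundary `∂_h A = A_h ∩ (Aᶜ)_h` of a set `A`. -/
def hBdry {X : Type*} [MetricSpace X] (A : Set X) (h : ℝ) : Set X := nbhd A h ∩ nbhd Aᶜ h

/-- There is a `b`-chain from `x` to `y` entirely contained in `S`. -/
def ChainIn {X : Type*} [MetricSpace X] (b : ℝ) (S : Set X) (x y : X) : Prop :=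
  ∃ (n : ℕ) (c : ℕ → X), c 0 = x ∧ c n = y ∧ (∀ i < n, dist (c i) (c (i + 1)) ≤ b) ∧
    ∀ i ≤ n, c i ∈ S

/-- `X` is uniformly `b`-connected. -/
def UnifConn (X : Type*) [MetricSpace X] (b : ℝ) : Prop :=
  ∀ E₁ > (0 : ℝ), ∃ E₂ ≥ E₁, ∀ x y : X, dist x y ≤ E₁ → ChainIn b (Metric.ball x E₂) x y

/-- `μ` is doubling: `μ(B(x,2r)) ≤ C μ(B(x,r))` for all `x` and all `r > 0`. -/
def DoublingMeasure' {X : Type*} [MetricSpace X] [MeasurableSpace X] (μ : Measure X) : Prop :=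
  ∃ C : ℝ≥0, 0 < C ∧ ∀ (x : X) (r : ℝ), 0 < r →
    μ (Metric.ball x (2 * r)) ≤ (C : ℝ≥0∞) * μ (Metric.ball x r)

/-- Property (M): every point of `B(x, r+1)` is within distance `C` of `B(x, r)`. -/
def PropertyM (X : Type*) [MetricSpace X] : Prop :=
  ∃ C : ℝ, 1 ≤ C ∧ ∀ (x : X) (r : ℝ), 0 < r → ∀ y ∈ Metric.ball x (r + 1),
    Metric.infDist y (Metric.ball x r) ≤ C

/-- The `h`-profile `I_h(t) = inf {μ(∂_h A) : A measurable, μ A < ∞, μ A ≥ t}`. -/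
def profile {X : Type*} [MetricSpace X] [MeasurableSpace X]
    (μ : Measure X) (h : ℝ) (t : ℝ≥0∞) : ℝ≥0∞ :=
  ⨅ (A : Set X) (_ : MeasurableSet A) (_ : μ A ≠ ∞) (_ : t ≤ μ A), μ (hBdry A h)

/-- A set is (metrically) connected: there is no nontrivial partition `A = A₁ ⊔ A₂`
with `d(A₁, A₂) ≥ 10`. -/
def MConn {X : Type*} [MetricSpace X] (A : Set X) : Prop :=
  ∀ A₁ A₂ : Set X, A = A₁ ∪ A₂ → Disjoint A₁ A₂ →
    (∀ x ∈ A₁, ∀ y ∈ A₂, 10 ≤ dist x y) → A₁ = ∅ ∨ A₂ = ∅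

/-- The `h`-profile restricted to connected sets. -/
def connProfile {X : Type*} [MetricSpace X] [MeasurableSpace X]
    (μ : Measure X) (h : ℝ) (t : ℝ≥0∞) : ℝ≥0∞ :=
  ⨅ (A : Set X) (_ : MeasurableSet A) (_ : MConn A) (_ : μ A ≠ ∞) (_ : t ≤ μ A),
    μ (hBdry A h)

/-- `φ(t) = inf {r > 0 : μ(B(x₀,r)) ≥ t}`, the right inverse of the growth function. -/
def phi {X : Type*} [MetricSpace X] [MeasurableSpace X]
    (μ : Measure X) (x₀ : X) (t : ℝ≥0∞) : ℝ :=
  sInf {r : ℝ | 0 < r ∧ t ≤ μ (Metric.ball x₀ r)}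

namespace IsoProof

variable {X : Type*} [MetricSpace X]

/-- iterated growth of `{z}` inside ambient set `W` with jump threshold `θ`. -/
def grow (W : Set X) (θ : ℝ) (z : X) : ℕ → Set X
  | 0 => {z}
  | n+1 => grow W θ z n ∪ (W ∩ {y | Metric.infDist y (grow W θ z n) < θ})

def growU (W : Set X) (θ : ℝ) (z : X) : Set X := ⋃ n, grow W θ z n

lemma grow_mono_succ (W : Set X) (θ : ℝ) (z : X) (n : ℕ) :
    grow W θ z n ⊆ grow W θ z (n+1) := subset_union_left

lemma grow_mono (W : Set X) (θ : ℝ) (z : X) {m n : ℕ} (h : m ≤ n) :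
    grow W θ z m ⊆ grow W θ z n := by
  induction n with
  | zero => simp_all
  | succ n ih =>
    rcases Nat.lt_or_ge m (n+1) with h' | h'
    · exact (ih (Nat.lt_succ_iff.mp h')).trans (grow_mono_succ W θ z n)
    · have : m = n + 1 := le_antisymm h h'
      subst this; exact subset_rfl

lemma mem_grow_self (W : Set X) (θ : ℝ) (z : X) (n : ℕ) : z ∈ grow W θ z n :=
  grow_mono W θ z (Nat.zero_le n) rfl

lemma mem_growU_self (W : Set X) (θ : ℝ) (z : X) : z ∈ growU W θ z :=
  mem_iUnion.mpr ⟨0, rfl⟩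

lemma grow_nonempty (W : Set X) (θ : ℝ) (z : X) (n : ℕ) : (grow W θ z n).Nonempty :=
  ⟨z, mem_grow_self W θ z n⟩

lemma grow_subset (W : Set X) (θ : ℝ) (z : X) (n : ℕ) :
    grow W θ z n ⊆ insert z W := by
  induction n with
  | zero => simp [grow]
  | succ n ih =>
    rintro y (hy | ⟨hyW, -⟩)
    · exact ih hy
    · exact mem_insert_iff.mpr (Or.inr hyW)

lemma growU_subset (W : Set X) (θ : ℝ) (z : X) : growU W θ z ⊆ insert z W := by
  refine iUnion_subset fun n => grow_subset W θ z n

lemma growU_subset' {W : Set X} {z : X} (θ : ℝ) (hz : z ∈ W) : growU W θ z ⊆ W := by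
  refine (growU_subset W θ z).trans ?_
  simp [insert_subset_iff, hz]

lemma grow_step {W : Set X} {θ : ℝ} {z y w : X} (hy : y ∈ W) (hw : w ∈ growU W θ z)
    (hd : dist y w < θ) : y ∈ growU W θ z := by
  obtain ⟨n, hn⟩ := mem_iUnion.mp hw
  refine mem_iUnion.mpr ⟨n+1, Or.inr ⟨hy, ?_⟩⟩
  exact lt_of_le_of_lt (Metric.infDist_le_dist_of_mem hn) hd

lemma grow_mono_W {W W' : Set X} {θ : ℝ} {z : X} (h : W ⊆ W') (n : ℕ) :
    grow W θ z n ⊆ grow W' θ z n := by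
  induction n with
  | zero => exact subset_rfl
  | succ n ih =>
    rintro y (hy | ⟨hyW, hyd⟩)
    · exact grow_mono_succ W' θ z n (ih hy)
    · refine Or.inr ⟨h hyW, ?_⟩
      calc Metric.infDist y (grow W' θ z n) ≤ Metric.infDist y (grow W θ z n) :=
            Metric.infDist_le_infDist_of_subset ih (grow_nonempty W θ z n)
        _ < θ := hyd

lemma growU_mono_W {W W' : Set X} {θ : ℝ} {z : X} (h : W ⊆ W') :
    growU W θ z ⊆ growU W' θ z :=
  iUnion_subset fun n => (grow_mono_W h n).trans (subset_iUnion _ n)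

lemma grow_chain {W : Set X} {θ : ℝ} {z : X} (hθ : 0 < θ) :
    ∀ n, ∀ y ∈ grow W θ z n, ∃ (k : ℕ) (c : ℕ → X), c 0 = y ∧ c k = z ∧
      (∀ i < k, dist (c i) (c (i+1)) < θ) ∧ (∀ i ≤ k, c i ∈ growU W θ z) := by
  intro n
  induction n with
  | zero =>
    rintro y rfl
    exact ⟨0, fun _ => y, rfl, rfl, by omega, fun i _ => mem_growU_self W θ y⟩
  | succ n ih =>
    rintro y (hy | ⟨hyW, hyd⟩)
    · exact ih y hy
    · obtain ⟨w, hw, hdw⟩ := (Metric.infDist_lt_iff (grow_nonempty W θ z n)).mp hyd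
      obtain ⟨k, c, hc0, hck, hjump, hmem⟩ := ih w hw
      refine ⟨k+1, fun i => if i = 0 then y else c (i-1), by simp, by simp [hck], ?_, ?_⟩
      · intro i hi
        rcases Nat.eq_zero_or_pos i with rfl | hpos
        · simpa [hc0] using hdw
        · have h1 : i ≠ 0 := Nat.pos_iff_ne_zero.mp hpos
          have h2 : i + 1 ≠ 0 := by omega
          simp only [h1, h2, if_false]
          have : i - 1 < k := by omega
          have := hjump (i-1) this
          have he : i - 1 + 1 = i + 1 - 1 := by omega
          rwa [he] at this
      · intro i hi
        rcases Nat.eq_zero_or_pos i with rfl | hpos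
        · simp only [if_pos rfl]
          exact mem_iUnion.mpr ⟨n+1, Or.inr ⟨hyW, hyd⟩⟩
        · have h1 : i ≠ 0 := Nat.pos_iff_ne_zero.mp hpos
          simp only [h1, if_false]
          exact hmem (i-1) (by omega)

lemma growU_chain {W : Set X} {θ : ℝ} {z : X} (hθ : 0 < θ) {y : X} (hy : y ∈ growU W θ z) :
    ∃ (k : ℕ) (c : ℕ → X), c 0 = y ∧ c k = z ∧
      (∀ i < k, dist (c i) (c (i+1)) < θ) ∧ (∀ i ≤ k, c i ∈ growU W θ z) := by
  obtain ⟨n, hn⟩ := mem_iUnion.mp hy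
  exact grow_chain hθ n y hn

/-- A chain which starts in `S` and ends outside `S` must cross. -/
lemma chain_cross {S : Set X} (c : ℕ → X) :
    ∀ n, c 0 ∈ S → c n ∉ S → ∃ i < n, c i ∈ S ∧ c (i+1) ∉ S := by
  intro n
  induction n with
  | zero => intro h0 hn; exact absurd h0 hn
  | succ n ih =>
    intro h0 hn
    by_cases hcn : c n ∈ S
    · exact ⟨n, Nat.lt_succ_self n, hcn, hn⟩
    · obtain ⟨i, hi, h1, h2⟩ := ih h0 hcn
      exact ⟨i, hi.trans (Nat.lt_succ_self n), h1, h2⟩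

lemma mconn_of_chains {K : Set X} {z₀ : X} (hz : z₀ ∈ K)
    (h : ∀ y ∈ K, ∃ (k : ℕ) (c : ℕ → X), c 0 = y ∧ c k = z₀ ∧
      (∀ i < k, dist (c i) (c (i+1)) < 10) ∧ (∀ i ≤ k, c i ∈ K)) : MConn K := by
  have aux : ∀ B₁ B₂ : Set X, K = B₁ ∪ B₂ → Disjoint B₁ B₂ →
      (∀ x ∈ B₁, ∀ y ∈ B₂, 10 ≤ dist x y) → z₀ ∈ B₁ → B₂.Nonempty → False := by
    intro B₁ B₂ hU hdisj hfar hz₀ ⟨w, hw⟩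
    have hwK : w ∈ K := hU ▸ Or.inr hw
    obtain ⟨k, c, hc0, hck, hjump, hmem⟩ := h w hwK
    have h0 : c 0 ∈ B₂ := hc0 ▸ hw
    have hk : c k ∉ B₂ := by
      rw [hck]; exact fun hmem2 => (Set.disjoint_left.mp hdisj hz₀) hmem2
    obtain ⟨i, hi, h1, h2⟩ := chain_cross c k h0 hk
    have hci1 : c (i+1) ∈ B₁ := by
      have : c (i+1) ∈ K := hmem (i+1) hi
      rw [hU] at this
      exact this.resolve_right h2
    have := hfar _ hci1 _ h1
    have hj := hjump i hi
    rw [dist_comm] at this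
    linarith
  intro A₁ A₂ hU hdisj hfar
  by_contra hcon
  push_neg at hcon
  obtain ⟨h1, h2⟩ := hcon
  have hz' : z₀ ∈ A₁ ∪ A₂ := hU ▸ hz
  rcases hz' with hz1 | hz2
  · exact aux A₁ A₂ hU hdisj hfar hz1 h2
  · refine aux A₂ A₁ (by rw [hU, Set.union_comm]) hdisj.symm ?_ hz2
      h1
    intro x hx y hy
    rw [dist_comm]
    exact hfar y hy x hx

lemma mconn_growU {W : Set X} {θ : ℝ} {z : X} (hθ0 : 0 < θ) (hθ : θ ≤ 10) :
    MConn (growU W θ z) := by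
  refine mconn_of_chains (mem_growU_self W θ z) ?_
  intro y hy
  obtain ⟨k, c, h0, hk, hjump, hmem⟩ := growU_chain hθ0 hy
  exact ⟨k, c, h0, hk, fun i hi => lt_of_lt_of_le (hjump i hi) hθ, hmem⟩

end IsoProof

namespace IsoProof

variable {X : Type*} [MetricSpace X]

/-! ### Accessible hulls -/

/-- absorb a point at distance `≤ e` into the hull, using a `b`-chain. -/
lemma acc_absorb {b e E : ℝ} (hb : 0 < b)
    (hE : ∀ x y : X, dist x y ≤ e → ChainIn b (Metric.ball x E) x y)
    {z w y : X} {F : ℝ} (hw : w ∈ growU (Metric.ball z F) (2*b) z)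
    (hwy : dist w y ≤ e) (hF : dist z w + E ≤ F) :
    y ∈ growU (Metric.ball z F) (2*b) z := by
  obtain ⟨n, c, hc0, hcn, hjump, hmem⟩ := hE w y hwy
  have key : ∀ i ≤ n, c i ∈ growU (Metric.ball z F) (2*b) z := by
    intro i
    induction i with
    | zero => intro _; rwa [hc0]
    | succ i ih =>
      intro hi
      have hii : i ≤ n := by omega
      have hball : c (i+1) ∈ Metric.ball z F := by
        have h1 : c (i+1) ∈ Metric.ball w E := hmem (i+1) hi
        have h2 : dist (c (i+1)) w < E := Metric.mem_ball.mp h1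
        have : dist (c (i+1)) z ≤ dist (c (i+1)) w + dist w z := dist_triangle _ _ _
        have hzw : dist w z = dist z w := dist_comm _ _
        refine Metric.mem_ball.mpr ?_
        linarith
      have hd : dist (c (i+1)) (c i) < 2*b := by
        have := hjump i (by omega)
        rw [dist_comm]
        linarith
      exact grow_step hball (ih hii) hd
  rw [← hcn]
  exact key n le_rfl

/-- Using property (M), every point of `B(z,ρ+1)` is in the hull of radius `ρ+1+E_g`. -/
lemma acc_ball {b CM Eg : ℝ} (hb : 0 < b) (hCM : 1 ≤ CM)
    (hpm : ∀ (x : X) (r : ℝ), 0 < r → ∀ y ∈ Metric.ball x (r + 1),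
      Metric.infDist y (Metric.ball x r) ≤ CM)
    (hEg : ∀ x y : X, dist x y ≤ CM + 2 → ChainIn b (Metric.ball x Eg) x y)
    (hEg' : 0 ≤ Eg) {z : X} {ρ F : ℝ} (hρ : 0 < ρ) (hF : ρ + 1 + Eg ≤ F) :
    Metric.ball z (ρ+1) ⊆ growU (Metric.ball z F) (2*b) z := by
  have aux : ∀ n : ℕ, ∀ y : X, dist z y < ρ + 1 → dist z y ≤ n/2 →
      y ∈ growU (Metric.ball z F) (2*b) z := by
    intro n
    induction n with
    | zero =>
      intro y _ h2
      have h0 : dist z y ≤ 0 := by simpa using h2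
      have hzy : z = y := dist_eq_zero.mp (le_antisymm h0 dist_nonneg)
      rw [← hzy]
      exact mem_growU_self _ _ _
    | succ n ih =>
      intro y h1 h2
      by_cases hd : dist z y ≤ CM + 2
      · refine acc_absorb hb hEg (mem_growU_self _ _ _) hd ?_
        simp only [dist_self]
        linarith
      · push_neg at hd
        have hrpos : 0 < dist z y - 1/2 := by linarith
        have hyb : y ∈ Metric.ball z ((dist z y - 1/2) + 1) := by
          refine Metric.mem_ball.mpr ?_
          rw [dist_comm]; linarith
        have hinf := hpm z (dist z y - 1/2) hrpos y hyb
        have hlt : Metric.infDist y (Metric.ball z (dist z y - 1/2)) < CM + 1 :=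
          lt_of_le_of_lt hinf (by linarith)
        obtain ⟨w, hwball, hdw⟩ :=
          (Metric.infDist_lt_iff (Metric.nonempty_ball.mpr hrpos)).mp hlt
        have hzw : dist z w < dist z y - 1/2 := by
          rw [dist_comm]; exact Metric.mem_ball.mp hwball
        have hw : w ∈ growU (Metric.ball z F) (2*b) z := by
          refine ih w (by linarith) ?_
          push_cast at h2 ⊢
          linarith
        refine acc_absorb hb hEg hw ?_ ?_
        · rw [dist_comm]; linarith
        · linarith
  intro y hy
  have hy' : dist z y < ρ + 1 := by rw [dist_comm]; exact Metric.mem_ball.mp hy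
  obtain ⟨n, hn⟩ := exists_nat_ge (2*(ρ+1))
  refine aux n y hy' ?_
  have : (2:ℝ) * dist z y ≤ 2*(ρ+1) := by linarith
  linarith [this.trans hn]

/-- points 4-close to the hull at radius `F` belong to the hull at radius `F + E₅`. -/
lemma acc_nbhd {b E₅ : ℝ} (hb : 0 < b)
    (hE₅ : ∀ x y : X, dist x y ≤ 5 → ChainIn b (Metric.ball x E₅) x y)
    (hE₅' : 5 ≤ E₅) {z x : X} {F F' : ℝ} (hF : 0 < F) (hF' : F + E₅ ≤ F')
    (hx : Metric.infDist x (growU (Metric.ball z F) (2*b) z) ≤ 4) :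
    x ∈ growU (Metric.ball z F') (2*b) z := by
  have hne : (growU (Metric.ball z F) (2*b) z).Nonempty := ⟨z, mem_growU_self _ _ _⟩
  have hlt : Metric.infDist x (growU (Metric.ball z F) (2*b) z) < 5 := lt_of_le_of_lt hx (by norm_num)
  obtain ⟨w, hw, hdw⟩ := (Metric.infDist_lt_iff hne).mp hlt
  have hwF' : w ∈ growU (Metric.ball z F') (2*b) z :=
    growU_mono_W (Metric.ball_subset_ball (by linarith)) hw
  have hzw : dist z w ≤ F := by
    rcases growU_subset (Metric.ball z F) (2*b) z hw with h | h
    · simp [h]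
      linarith
    · have := Metric.mem_ball.mp h
      rw [dist_comm]; linarith
  refine acc_absorb hb hE₅ hwF' ?_ ?_
  · rw [dist_comm]; linarith
  · linarith

/-! ### Components -/

variable (A : Set X)

def comp (a : X) : Set X := growU A 10 a

variable {A}

lemma comp_subset {a : X} (ha : a ∈ A) : comp A a ⊆ A := growU_subset' 10 ha

lemma mem_comp_self (a : X) : a ∈ comp A a := mem_growU_self A 10 a

lemma comp_step {a y w : X} (hy : y ∈ A) (hw : w ∈ comp A a) (hd : dist y w < 10) :
    y ∈ comp A a := grow_step hy hw hd

lemma comp_sub {a b' : X} (ha : a ∈ A) (hb : b' ∈ comp A a) : comp A b' ⊆ comp A a := by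
  refine iUnion_subset ?_
  intro n
  induction n with
  | zero => rintro y rfl; exact hb
  | succ n ih =>
    rintro y (hy | ⟨hyA, hyd⟩)
    · exact ih hy
    · obtain ⟨w, hw, hdw⟩ := (Metric.infDist_lt_iff (grow_nonempty A 10 b' n)).mp hyd
      exact comp_step hyA (ih hw) hdw

lemma comp_symm {a : X} (ha : a ∈ A) : ∀ y ∈ comp A a, a ∈ comp A y := by
  refine fun y hy => ?_
  obtain ⟨n, hn⟩ := mem_iUnion.mp hy
  clear hy
  induction n generalizing y with
  | zero =>
    rw [show y = a from hn]
    exact mem_comp_self a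
  | succ n ih =>
    rcases hn with hy | ⟨hyA, hyd⟩
    · exact ih y hy
    · obtain ⟨w, hw, hdw⟩ := (Metric.infDist_lt_iff (grow_nonempty A 10 a n)).mp hyd
      have haw : a ∈ comp A w := ih w hw
      have hwA : w ∈ A := comp_subset ha (mem_iUnion.mpr ⟨n, hw⟩)
      have hwy : w ∈ comp A y := comp_step hwA (mem_comp_self y) (by rwa [dist_comm])
      exact comp_sub hyA hwy haw

lemma comp_eq_of_mem {a b' : X} (ha : a ∈ A) (hb' : b' ∈ A) (h : b' ∈ comp A a) :
    comp A b' = comp A a := by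
  refine subset_antisymm (comp_sub ha h) ?_
  have := comp_symm ha b' h
  exact comp_sub hb' this

lemma comp_eq_or_disjoint {a b' : X} (ha : a ∈ A) (hb' : b' ∈ A) :
    comp A a = comp A b' ∨ comp A a ∩ comp A b' = ∅ := by
  by_cases h : (comp A a ∩ comp A b').Nonempty
  · obtain ⟨x, hxa, hxb⟩ := h
    have hxA : x ∈ A := comp_subset ha hxa
    left
    rw [← comp_eq_of_mem ha hxA hxa, ← comp_eq_of_mem hb' hxA hxb]
  · right
    exact Set.not_nonempty_iff_eq_empty.mp h

lemma comp_far {a b' : X} (ha : a ∈ A) (hb' : b' ∈ A) (hne : comp A a ≠ comp A b') :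
    ∀ u ∈ comp A a, ∀ w ∈ comp A b', 10 ≤ dist u w := by
  intro u hu w hw
  by_contra hcon
  push_neg at hcon
  have hwA : w ∈ A := comp_subset hb' hw
  have : w ∈ comp A a := comp_step hwA hu (by rwa [dist_comm])
  have : comp A a ∩ comp A b' ≠ ∅ := by
    refine Set.nonempty_iff_ne_empty.mp ⟨w, this, hw⟩
  rcases comp_eq_or_disjoint ha hb' with h | h
  · exact hne h
  · exact this h

lemma mconn_comp (a : X) : MConn (comp A a) :=
  mconn_growU (by norm_num) le_rfl

end IsoProof
namespace IsoProof

variable {X : Type*} [MetricSpace X]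

/-! ### boundary lemmas -/

lemma nbhd_closed (A : Set X) (h : ℝ) : IsClosed (nbhd A h) := by
  have : nbhd A h = (fun x => Metric.infDist x A) ⁻¹' (Set.Iic h) := rfl
  rw [this]
  exact IsClosed.preimage (Metric.continuous_infDist_pt A) isClosed_Iic

lemma nbhd_meas [MeasurableSpace X] [BorelSpace X] (A : Set X) (h : ℝ) :
    MeasurableSet (nbhd A h) := (nbhd_closed A h).measurableSet

lemma hBdry_meas [MeasurableSpace X] [BorelSpace X] (A : Set X) (h : ℝ) :
    MeasurableSet (hBdry A h) := (nbhd_meas A h).inter (nbhd_meas Aᶜ h)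

lemma real_le_of_forall_eps {a c : ℝ} (h : ∀ ε : ℝ, 0 < ε → ε ≤ 1 → a ≤ c + ε) : a ≤ c := by
  by_contra hcon
  push_neg at hcon
  have hd : 0 < (a - c)/2 := by linarith
  rcases le_or_gt ((a-c)/2) 1 with h1 | h1
  · have := h _ hd h1
    linarith
  · have := h 1 one_pos le_rfl
    linarith

lemma bdry_comp_subset {A : Set X} {a : X} (ha : a ∈ A) (hq : Aᶜ.Nonempty) :
    hBdry (comp A a) 2 ⊆ hBdry A 2 := by
  rintro x ⟨h1, h2⟩
  have hPne : (comp A a).Nonempty := ⟨a, mem_comp_self a⟩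
  have hPcne : (comp A a)ᶜ.Nonempty := by
    obtain ⟨q, hq'⟩ := hq
    exact ⟨q, fun hmem => hq' (comp_subset ha hmem)⟩
  constructor
  · exact le_trans (Metric.infDist_le_infDist_of_subset (comp_subset ha) hPne) h1
  · show Metric.infDist x Aᶜ ≤ 2
    refine real_le_of_forall_eps ?_
    intro ε hε hε1
    have h2' : Metric.infDist x (comp A a)ᶜ < 2 + ε := lt_of_le_of_lt h2 (by linarith)
    obtain ⟨w, hw, hdw⟩ := (Metric.infDist_lt_iff hPcne).mp h2'
    have h1' : Metric.infDist x (comp A a) < 2 + ε := lt_of_le_of_lt h1 (by linarith)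
    obtain ⟨p, hp, hdp⟩ := (Metric.infDist_lt_iff hPne).mp h1'
    have hwA : w ∉ A := by
      intro hwA
      refine hw (comp_step hwA hp ?_)
      calc dist w p ≤ dist w x + dist x p := dist_triangle _ _ _
        _ = dist x w + dist x p := by rw [dist_comm w x]
        _ < (2+ε) + (2+ε) := by linarith
        _ < 10 := by linarith
    exact le_trans (Metric.infDist_le_dist_of_mem hwA) hdw.le

lemma bdry_comp_disjoint {A : Set X} {a b' : X} (ha : a ∈ A) (hb' : b' ∈ A)
    (hne : comp A a ≠ comp A b') :
    Disjoint (hBdry (comp A a) 2) (hBdry (comp A b') 2) := by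
  rw [Set.disjoint_left]
  rintro x ⟨h1, -⟩ ⟨h2, -⟩
  have h1' : Metric.infDist x (comp A a) < 3 := lt_of_le_of_lt h1 (by norm_num)
  have h2' : Metric.infDist x (comp A b') < 3 := lt_of_le_of_lt h2 (by norm_num)
  obtain ⟨p, hp, hdp⟩ := (Metric.infDist_lt_iff ⟨a, mem_comp_self a⟩).mp h1'
  obtain ⟨q, hq, hdq⟩ := (Metric.infDist_lt_iff ⟨b', mem_comp_self b'⟩).mp h2'
  have := comp_far ha hb' hne p hp q hq
  have : (10:ℝ) ≤ dist p q := this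
  have hd : dist p q ≤ dist p x + dist x q := dist_triangle _ _ _
  rw [dist_comm p x] at hd
  linarith

lemma nbhd4_comp_disjoint {A : Set X} {a b' : X} (ha : a ∈ A) (hb' : b' ∈ A)
    (hne : comp A a ≠ comp A b') :
    Disjoint (nbhd (comp A a) 4) (nbhd (comp A b') 4) := by
  rw [Set.disjoint_left]
  rintro x h1 h2
  have h1' : Metric.infDist x (comp A a) < 9/2 := lt_of_le_of_lt h1 (by norm_num)
  have h2' : Metric.infDist x (comp A b') < 9/2 := lt_of_le_of_lt h2 (by norm_num)
  obtain ⟨p, hp, hdp⟩ := (Metric.infDist_lt_iff ⟨a, mem_comp_self a⟩).mp h1'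
  obtain ⟨q, hq, hdq⟩ := (Metric.infDist_lt_iff ⟨b', mem_comp_self b'⟩).mp h2'
  have h10 : (10:ℝ) ≤ dist p q := comp_far ha hb' hne p hp q hq
  have hd : dist p q ≤ dist p x + dist x q := dist_triangle _ _ _
  rw [dist_comm p x] at hd
  linarith

lemma exists_crossing {b : ℝ} (hconn : UnifConn X b) {A : Set X} {a q : X}
    (ha : a ∈ A) (hq : q ∉ A) : ∃ y ∈ A, Metric.infDist y Aᶜ ≤ b := by
  have hne : a ≠ q := fun h => hq (h ▸ ha)
  have hd : 0 < dist a q := dist_pos.mpr hne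
  obtain ⟨E₂, hE₂, hspec⟩ := hconn (dist a q) hd
  obtain ⟨n, c, hc0, hcn, hjump, hmem⟩ := hspec a q le_rfl
  obtain ⟨i, hi, h1, h2⟩ := chain_cross c n (hc0 ▸ ha) (hcn ▸ hq)
  refine ⟨c i, h1, ?_⟩
  exact le_trans (Metric.infDist_le_dist_of_mem h2) (hjump i hi)

lemma ball_sub_bdry {b : ℝ} (hb : 0 < b) (hb4 : b ≤ 1/4) {A : Set X} {y : X}
    (hy : y ∈ A) (hyd : Metric.infDist y Aᶜ ≤ b) : Metric.ball y 1 ⊆ hBdry A 2 := by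
  intro u hu
  have hd : dist u y < 1 := Metric.mem_ball.mp hu
  constructor
  · show Metric.infDist u A ≤ 2
    exact le_trans (Metric.infDist_le_dist_of_mem hy) (by linarith)
  · show Metric.infDist u Aᶜ ≤ 2
    calc Metric.infDist u Aᶜ ≤ Metric.infDist y Aᶜ + dist u y :=
          Metric.infDist_le_infDist_add_dist
      _ ≤ b + 1 := by linarith
      _ ≤ 2 := by linarith

/-! ### measure lemmas -/

variable [MeasurableSpace X] [BorelSpace X] {μ : Measure X}

lemma doub_pow {CD : ℝ≥0}
    (hD : ∀ (x : X) (r : ℝ), 0 < r → μ (Metric.ball x (2*r)) ≤ (CD : ℝ≥0∞) * μ (Metric.ball x r))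
    (k : ℕ) (x : X) {r : ℝ} (hr : 0 < r) :
    μ (Metric.ball x (2^k * r)) ≤ (CD : ℝ≥0∞)^k * μ (Metric.ball x r) := by
  induction k with
  | zero => simp
  | succ k ih =>
    have h1 : (2:ℝ)^(k+1) * r = 2 * (2^k * r) := by ring
    have h2 : 0 < (2:ℝ)^k * r := by positivity
    calc μ (Metric.ball x (2^(k+1) * r)) = μ (Metric.ball x (2 * (2^k * r))) := by rw [h1]
      _ ≤ (CD : ℝ≥0∞) * μ (Metric.ball x (2^k * r)) := hD x _ h2
      _ ≤ (CD : ℝ≥0∞) * ((CD : ℝ≥0∞)^k * μ (Metric.ball x r)) := by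
          exact mul_le_mul_right ih _
      _ = (CD : ℝ≥0∞)^(k+1) * μ (Metric.ball x r) := by rw [pow_succ]; ring

lemma ball_pos {CD : ℝ≥0}
    (hD : ∀ (x : X) (r : ℝ), 0 < r → μ (Metric.ball x (2*r)) ≤ (CD : ℝ≥0∞) * μ (Metric.ball x r))
    (hX : μ Set.univ ≠ 0) (x : X) {r : ℝ} (hr : 0 < r) : 0 < μ (Metric.ball x r) := by
  by_contra hcon
  push_neg at hcon
  have h0 : μ (Metric.ball x r) = 0 := le_antisymm hcon (zero_le ..)
  have hk : ∀ k : ℕ, μ (Metric.ball x (2^k * r)) = 0 := by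
    intro k
    have := doub_pow hD k x hr
    rw [h0, mul_zero] at this
    exact le_antisymm this (zero_le ..)
  have hcover : (Set.univ : Set X) = ⋃ k : ℕ, Metric.ball x (2^k * r) := by
    ext w
    simp only [Set.mem_univ, Set.mem_iUnion, true_iff]
    obtain ⟨k, hk'⟩ := pow_unbounded_of_one_lt (dist w x / r) (by norm_num : (1:ℝ) < 2)
    exact ⟨k, Metric.mem_ball.mpr (by rw [div_lt_iff₀ hr] at hk'; linarith)⟩
  apply hX
  rw [hcover]
  exact measure_iUnion_null fun k => hk k

lemma ball_fin {CD : ℝ≥0} {x₀ : X}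
    (hD : ∀ (x : X) (r : ℝ), 0 < r → μ (Metric.ball x (2*r)) ≤ (CD : ℝ≥0∞) * μ (Metric.ball x r))
    (h1 : μ (Metric.ball x₀ 1) ≠ ∞) (x : X) (r : ℝ) : μ (Metric.ball x r) ≠ ∞ := by
  have hsub : Metric.ball x r ⊆ Metric.ball x₀ (dist x₀ x + max r 0 + 1) := by
    intro u hu
    have h2 : dist u x < r := Metric.mem_ball.mp hu
    have h3 : dist u x₀ ≤ dist u x + dist x x₀ := dist_triangle _ _ _
    refine Metric.mem_ball.mpr ?_
    have : r ≤ max r 0 := le_max_left _ _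
    rw [dist_comm x x₀] at h3
    linarith
  obtain ⟨k, hk⟩ := pow_unbounded_of_one_lt (dist x₀ x + max r 0 + 1) (by norm_num : (1:ℝ) < 2)
  have hsub2 : Metric.ball x₀ (dist x₀ x + max r 0 + 1) ⊆ Metric.ball x₀ (2^k * 1) := by
    refine Metric.ball_subset_ball ?_
    rw [mul_one]
    exact hk.le
  refine ne_top_of_le_ne_top ?_ ((measure_mono hsub).trans (measure_mono hsub2))
  refine ne_top_of_le_ne_top ?_ (doub_pow hD k x₀ one_pos)
  exact ENNReal.mul_ne_top (by simp) h1

lemma measure_ball_le_of_lt {z : X} {ρ : ℝ} {T : ℝ≥0∞} (hρ : 0 < ρ)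
    (h : ∀ r' : ℝ, 0 < r' → r' < ρ → μ (Metric.ball z r') ≤ T) :
    μ (Metric.ball z ρ) ≤ T := by
  have hcover : Metric.ball z ρ = ⋃ n : ℕ, Metric.ball z (ρ - 1/(n+1)) := by
    ext w
    simp only [Set.mem_iUnion, Metric.mem_ball]
    constructor
    · intro hw
      obtain ⟨n, hn⟩ := exists_nat_one_div_lt (show (0:ℝ) < ρ - dist w z by linarith)
      exact ⟨n, by push_cast at hn ⊢; linarith⟩
    · rintro ⟨n, hn⟩
      have : (0:ℝ) < 1/(n+1) := by positivity
      linarith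
  rw [hcover]
  have hmono : Monotone (fun n : ℕ => Metric.ball z (ρ - 1/(n+1))) := by
    intro m n hmn
    apply Metric.ball_subset_ball
    have hc : (m:ℝ) ≤ n := Nat.cast_le.mpr hmn
    have h1 : (1:ℝ)/(n+1) ≤ 1/(m+1) := by
      apply one_div_le_one_div_of_le
      · positivity
      · linarith
    linarith
  rw [(hmono.directed_le).measure_iUnion]
  refine iSup_le fun n => ?_
  rcases le_or_gt (ρ - 1/(n+1)) 0 with hr | hr
  · rw [Metric.ball_eq_empty.mpr hr]
    simp
  · refine h _ hr ?_
    have : (0:ℝ) < 1/(n+1) := by positivity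
    linarith

lemma measure_univ_sup (z : X) : μ Set.univ = ⨆ n : ℕ, μ (Metric.ball z n) := by
  rw [← Metric.iUnion_ball_nat z]
  refine Directed.measure_iUnion ?_
  intro m n
  exact ⟨max m n, Metric.ball_subset_ball (by exact_mod_cast le_max_left m n),
    Metric.ball_subset_ball (by exact_mod_cast le_max_right m n)⟩

end IsoProof
namespace IsoProof

variable {X : Type*} [MetricSpace X]

lemma grow_meas [MeasurableSpace X] [BorelSpace X] {W : Set X} (hW : MeasurableSet W)
    (θ : ℝ) (z : X) (n : ℕ) : MeasurableSet (grow W θ z n) := by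
  induction n with
  | zero => exact measurableSet_singleton z
  | succ n ih =>
    refine ih.union (hW.inter ?_)
    exact (Metric.continuous_infDist_pt _).measurable measurableSet_Iio

lemma growU_meas [MeasurableSpace X] [BorelSpace X] {W : Set X} (hW : MeasurableSet W)
    (θ : ℝ) (z : X) : MeasurableSet (growU W θ z) :=
  MeasurableSet.iUnion fun n => grow_meas hW θ z n

variable [MeasurableSpace X] [BorelSpace X] {μ : Measure X}

lemma shell_lemma
    {b CM Eg E₅ : ℝ} {CD : ℝ≥0} {k : ℕ}
    (hb : 0 < b) (hb4 : b ≤ 1/4) (hCM : 1 ≤ CM)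
    (hpm : ∀ (x : X) (r : ℝ), 0 < r → ∀ y ∈ Metric.ball x (r + 1),
      Metric.infDist y (Metric.ball x r) ≤ CM)
    (hEg : ∀ x y : X, dist x y ≤ CM + 2 → ChainIn b (Metric.ball x Eg) x y)
    (hEg0 : 0 ≤ Eg)
    (hE₅ : ∀ x y : X, dist x y ≤ 5 → ChainIn b (Metric.ball x E₅) x y)
    (hE₅' : 5 ≤ E₅)
    (hD : ∀ (x : X) (r : ℝ), 0 < r → μ (Metric.ball x (2*r)) ≤ (CD:ℝ≥0∞) * μ (Metric.ball x r))
    (hCD0 : CD ≠ 0)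
    (hfin : ∀ (x : X) (r : ℝ), μ (Metric.ball x r) ≠ ∞)
    (hunb : ∀ (x : X) (S : ℝ), ∃ w : X, S ≤ dist x w)
    (hk : 2 + Eg + 4*E₅ ≤ 2^k)
    (z : X) {ρ : ℝ} (hρ : 1 ≤ ρ) (τ T : ℝ≥0∞)
    (hT0 : T ≠ 0) (hTfin : T ≠ ∞)
    (hτ : ∀ ρ' : ℝ, ρ < ρ' → τ ≤ μ (Metric.ball z ρ'))
    (hT : μ (Metric.ball z ρ) ≤ T) :
    ∃ K : Set X, MeasurableSet K ∧ MConn K ∧ μ K ≠ ∞ ∧ τ ≤ μ K ∧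
      μ (hBdry K 2) ≤ 2 * (CD:ℝ≥0∞)^k * T / ENNReal.ofReal ρ := by
  have hb2 : 0 < 2*b := by linarith
  set F : ℕ → ℝ := fun j => ρ + 1 + Eg + j * E₅ with hFdef
  set K : ℕ → Set X := fun j => growU (Metric.ball z (F j)) (2*b) z with hKdef
  have hF0 : ∀ j : ℕ, 0 < F j := by
    intro j
    have : (0:ℝ) ≤ j * E₅ := by positivity
    simp only [hFdef]
    linarith
  have hFmono : ∀ j : ℕ, F j + E₅ ≤ F (j+1) := by
    intro j
    simp only [hFdef]
    push_cast
    ring_nf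
    linarith
  have hFle : ∀ {j j' : ℕ}, j ≤ j' → F j ≤ F j' := by
    intro j j' h
    simp only [hFdef]
    have : (j:ℝ) * E₅ ≤ j' * E₅ := by
      have : (j:ℝ) ≤ j' := Nat.cast_le.mpr h
      nlinarith
    linarith
  have hKmeas : ∀ j, MeasurableSet (K j) :=
    fun j => growU_meas Metric.isOpen_ball.measurableSet _ _
  have hKball : ∀ j, K j ⊆ Metric.ball z (F j) :=
    fun j => growU_subset' _ (Metric.mem_ball_self (hF0 j))
  have hKmono : ∀ {j j' : ℕ}, j ≤ j' → K j ⊆ K j' :=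
    fun h => growU_mono_W (Metric.ball_subset_ball (hFle h))
  have hKfin : ∀ j, μ (K j) ≠ ∞ :=
    fun j => ne_top_of_le_ne_top (hfin z (F j)) (measure_mono (hKball j))
  have hKconn : ∀ j, MConn (K j) := fun j => mconn_growU hb2 (by linarith)
  have hKsup : ∀ j, Metric.ball z (ρ+1) ⊆ K j := by
    intro j
    refine acc_ball hb hCM hpm hEg hEg0 (by linarith : (0:ℝ) < ρ) ?_
    have : (0:ℝ) ≤ j * E₅ := by positivity
    simp only [hFdef]
    linarith
  have hKτ : ∀ j, τ ≤ μ (K j) :=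
    fun j => (hτ (ρ+1) (by linarith)).trans (measure_mono (hKsup j))
  have habs : ∀ (j : ℕ) (x : X), Metric.infDist x (K j) ≤ 4 → x ∈ K (j+1) :=
    fun j x hx => acc_nbhd hb hE₅ hE₅' (hF0 j) (hFmono j) hx
  have hshell : ∀ j : ℕ, 1 ≤ j → hBdry (K j) 2 ⊆ K (j+1) \ K (j-1) := by
    rintro j hj x ⟨h1, h2⟩
    refine ⟨habs j x (le_trans h1 (by norm_num)), ?_⟩
    have hKc : (K j)ᶜ.Nonempty := by
      obtain ⟨w, hw⟩ := hunb z (F j)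
      refine ⟨w, fun hmem => ?_⟩
      have := Metric.mem_ball.mp (hKball j hmem)
      rw [dist_comm] at this
      linarith
    have h2' : Metric.infDist x (K j)ᶜ < 3 := lt_of_le_of_lt h2 (by norm_num)
    obtain ⟨w, hw, hdw⟩ := (Metric.infDist_lt_iff hKc).mp h2'
    intro hxK
    apply hw
    have hwj : w ∈ K (j-1+1) := by
      refine habs (j-1) w ?_
      have := Metric.infDist_le_dist_of_mem hxK (x := w)
      rw [dist_comm] at hdw
      linarith
    rwa [Nat.sub_add_cancel hj] at hwj
  have hdisj : ∀ l l' : ℕ, l < l' →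
      Disjoint (hBdry (K (2*l+1)) 2) (hBdry (K (2*l'+1)) 2) := by
    intro l l' hll
    rw [Set.disjoint_left]
    intro x hx hx'
    have h1 : x ∈ K (2*l+1+1) := ((hshell (2*l+1) (by omega)) hx).1
    have h2 : x ∉ K (2*l'+1-1) := ((hshell (2*l'+1) (by omega)) hx').2
    exact h2 (hKmono (by omega) h1)
  set m : ℕ := Nat.ceil ρ with hm
  set L : ℕ := m/2 + 1 with hL
  -- all shells with index < L live inside the big ball
  have hidx : ∀ l : ℕ, l < L → 2*l+1+1 ≤ m+2 := by
    intro l hl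
    have : l ≤ m/2 := by omega
    omega
  have hsub : ∀ l : ℕ, l < L → hBdry (K (2*l+1)) 2 ⊆ Metric.ball z (F (m+2)) := by
    intro l hl
    refine fun x hx => ?_
    have h1 : x ∈ K (2*l+1+1) := ((hshell (2*l+1) (by omega)) hx).1
    exact Metric.ball_subset_ball (hFle (hidx l hl)) (hKball _ (hKmono le_rfl h1))
  have hmρ : (m:ℝ) ≤ ρ + 1 := by
    have := Nat.ceil_lt_add_one (by linarith : (0:ℝ) ≤ ρ)
    exact this.le
  have hmρ' : ρ ≤ (m:ℝ) := Nat.le_ceil ρ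
  have hFbig : F (m+2) ≤ 2^k * ρ := by
    simp only [hFdef]
    push_cast
    have h1 : ((m:ℝ)+2) * E₅ ≤ (ρ+3) * E₅ := by nlinarith
    have h2 : (ρ+3) * E₅ ≤ 4*ρ*E₅ := by nlinarith
    have h3 : ρ + 1 + Eg ≤ ρ*(2+Eg) := by nlinarith
    have h4 : ρ*(2+Eg) + 4*ρ*E₅ = ρ * (2 + Eg + 4*E₅) := by ring
    have h5 : ρ * (2 + Eg + 4*E₅) ≤ ρ * 2^k := by nlinarith
    nlinarith
  have hbig : μ (Metric.ball z (F (m+2))) ≤ (CD:ℝ≥0∞)^k * T := by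
    calc μ (Metric.ball z (F (m+2))) ≤ μ (Metric.ball z (2^k * ρ)) :=
          measure_mono (Metric.ball_subset_ball hFbig)
      _ ≤ (CD:ℝ≥0∞)^k * μ (Metric.ball z ρ) := doub_pow hD k z (by linarith)
      _ ≤ (CD:ℝ≥0∞)^k * T := mul_le_mul_right hT _
  set β : ℝ≥0∞ := 2 * (CD:ℝ≥0∞)^k * T / ENNReal.ofReal ρ with hβ
  set S : ℝ≥0∞ := (CD:ℝ≥0∞)^k * T with hS
  have hS0 : S ≠ 0 := by
    simp only [hS]
    exact mul_ne_zero (pow_ne_zero _ (by exact_mod_cast hCD0)) hT0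
  have hSfin : S ≠ ∞ := ENNReal.mul_ne_top (by simp) hTfin
  have hρ0 : ENNReal.ofReal ρ ≠ 0 := by
    simp [ENNReal.ofReal_eq_zero]
    linarith
  have hρfin : ENNReal.ofReal ρ ≠ ∞ := ENNReal.ofReal_ne_top
  -- find a good shell
  have hgood : ∃ l : ℕ, l < L ∧ μ (hBdry (K (2*l+1)) 2) ≤ β := by
    by_contra hcon
    push_neg at hcon
    have hsum : ∑ l ∈ Finset.range L, μ (hBdry (K (2*l+1)) 2) ≤ S := by
      rw [← measure_biUnion_finset ?_ (fun l _ => hBdry_meas _ _)]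
      · refine le_trans (measure_mono ?_) hbig
        exact Set.iUnion₂_subset fun l hl => hsub l (Finset.mem_range.mp hl)
      · intro l hl l' hl' hne
        rcases Nat.lt_or_ge l l' with h | h
        · exact hdisj l l' h
        · have : l' < l := lt_of_le_of_ne h (Ne.symm hne)
          exact (hdisj l' l this).symm
    have hLβ : (L:ℝ≥0∞) * β ≤ ∑ l ∈ Finset.range L, μ (hBdry (K (2*l+1)) 2) := by
      have := Finset.card_nsmul_le_sum (Finset.range L)
        (fun l => μ (hBdry (K (2*l+1)) 2)) β
        (fun l hl => (hcon l (Finset.mem_range.mp hl)).le)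
      simpa [nsmul_eq_mul] using this
    have hLρ : ENNReal.ofReal (ρ+1) ≤ 2 * (L:ℝ≥0∞) := by
      have hreal : ρ + 1 ≤ 2 * L := by
        have h1 : (m:ℝ) ≤ 2 * (m/2 : ℕ) + 1 := by
          have := Nat.lt_succ_self m
          have h2 : m ≤ 2 * (m/2) + 1 := by omega
          exact_mod_cast h2
        have h3 : (L:ℝ) = (m/2 : ℕ) + 1 := by exact_mod_cast rfl
        rw [h3]
        linarith
      calc ENNReal.ofReal (ρ+1) ≤ ENNReal.ofReal (2*L) := ENNReal.ofReal_le_ofReal hreal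
        _ = 2 * (L:ℝ≥0∞) := by
            rw [ENNReal.ofReal_mul (by norm_num)]
            simp [ENNReal.ofReal_natCast]
    have hchain : S * (ENNReal.ofReal (ρ+1) / ENNReal.ofReal ρ) ≤ S := by
      calc S * (ENNReal.ofReal (ρ+1) / ENNReal.ofReal ρ)
          = ENNReal.ofReal (ρ+1) * S / ENNReal.ofReal ρ := by
            simp only [div_eq_mul_inv]; ring
        _ ≤ (2 * (L:ℝ≥0∞)) * S / ENNReal.ofReal ρ := by
            gcongr
        _ = (L:ℝ≥0∞) * (2 * S / ENNReal.ofReal ρ) := by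
            simp only [div_eq_mul_inv]; ring
        _ = (L:ℝ≥0∞) * β := by
            simp only [hβ, hS, div_eq_mul_inv]; ring
        _ ≤ ∑ l ∈ Finset.range L, μ (hBdry (K (2*l+1)) 2) := hLβ
        _ ≤ S := hsum
    have hgt : S < S * (ENNReal.ofReal (ρ+1) / ENNReal.ofReal ρ) := by
      have h1 : (1:ℝ≥0∞) < ENNReal.ofReal (ρ+1) / ENNReal.ofReal ρ := by
        rw [ENNReal.lt_div_iff_mul_lt (Or.inl hρ0) (Or.inl hρfin), one_mul]
        exact ENNReal.ofReal_lt_ofReal_iff_of_nonneg (by linarith) |>.mpr (by linarith)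
      calc S = S * 1 := by rw [mul_one]
        _ < S * (ENNReal.ofReal (ρ+1) / ENNReal.ofReal ρ) := by
            exact ENNReal.mul_lt_mul_right hS0 hSfin h1
    exact absurd hchain (not_le.mpr hgt)
  obtain ⟨l, hl, hgood'⟩ := hgood
  refine ⟨K (2*l+1), hKmeas _, hKconn _, hKfin _, hKτ _, ?_⟩
  simpa [hβ] using hgood'

end IsoProof
namespace IsoProof

variable {X : Type*} [MetricSpace X] [MeasurableSpace X] [BorelSpace X] {μ : Measure X}

lemma comp_meas {A : Set X} (hA : MeasurableSet A) (a : X) : MeasurableSet (comp A a) :=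
  growU_meas hA 10 a

section comps

variable {A : Set X}

/-- The set of components of `A`. -/
def comps (A : Set X) : Set (Set X) := (fun a => comp A a) '' A

lemma comps_rep : ∀ P : comps A, ∃ a : X, a ∈ A ∧ comp A a = ↑P := by
  rintro ⟨P, a, ha, rfl⟩
  exact ⟨a, ha, rfl⟩

lemma comps_countable [SigmaFinite μ] (hA : MeasurableSet A)
    (hpos : ∀ (x : X) (r : ℝ), 0 < r → 0 < μ (Metric.ball x r)) :
    (comps A).Countable := by
  choose rep hrepA hrep using comps_rep (A := A)
  set As : comps A → Set X := fun P => nbhd (↑P) 4 with hAs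
  have hmeas : ∀ P, MeasurableSet (As P) := fun P => nbhd_meas _ _
  have hdisj : Pairwise (Function.onFun Disjoint As) := by
    intro P Q hPQ
    have hne : comp A (rep P) ≠ comp A (rep Q) := by
      rw [hrep P, hrep Q]
      exact fun h => hPQ (Subtype.ext h)
    have h2 : Disjoint (nbhd (↑P : Set X) 4) (nbhd (↑Q : Set X) 4) := by
      rw [← hrep P, ← hrep Q]
      exact nbhd4_comp_disjoint (hrepA P) (hrepA Q) hne
    exact h2
  have hcnt := MeasureTheory.Measure.countable_meas_pos_of_disjoint_iUnion
    (μ := μ) hmeas hdisj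
  have hall : {i : comps A | 0 < μ (As i)} = Set.univ := by
    ext P
    simp only [Set.mem_setOf_eq, Set.mem_univ, iff_true]
    refine lt_of_lt_of_le (hpos (rep P) 4 (by norm_num)) (measure_mono ?_)
    intro u hu
    have hmem : rep P ∈ (↑P : Set X) := by
      rw [← hrep P]; exact mem_comp_self _
    have : Metric.infDist u (↑P : Set X) ≤ dist u (rep P) :=
      Metric.infDist_le_dist_of_mem hmem
    have hd : dist u (rep P) < 4 := Metric.mem_ball.mp hu
    show Metric.infDist u (↑P : Set X) ≤ 4
    linarith
  rw [hall] at hcnt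
  have : Countable (comps A) := Set.countable_univ_iff.mp hcnt
  exact Set.countable_coe_iff.mp this

lemma comps_disjoint : Pairwise (Function.onFun Disjoint fun (P : comps A) => (↑P : Set X)) := by
  choose rep hrepA hrep using comps_rep (A := A)
  intro P Q hPQ
  have hne : comp A (rep P) ≠ comp A (rep Q) := by
    rw [hrep P, hrep Q]
    exact fun h => hPQ (Subtype.ext h)
  have : Disjoint (comp A (rep P)) (comp A (rep Q)) := by
    rcases comp_eq_or_disjoint (hrepA P) (hrepA Q) with h | h
    · exact absurd h hne
    · exact Set.disjoint_iff_inter_eq_empty.mpr h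
  show Disjoint (↑P : Set X) (↑Q : Set X)
  rwa [← hrep P, ← hrep Q]

lemma comps_cover : ⋃ (P : comps A), (↑P : Set X) = A := by
  apply subset_antisymm
  · refine Set.iUnion_subset ?_
    rintro ⟨P, a, ha, rfl⟩
    exact comp_subset ha
  · intro a ha
    exact Set.mem_iUnion.mpr ⟨⟨comp A a, a, ha, rfl⟩, mem_comp_self a⟩

/-- Summed strong-profile lower bound over the components. -/
lemma L1_bound [SigmaFinite μ] {x₀ : X} {C : ℝ≥0} (hCfin : (C:ℝ≥0∞) ≠ ∞)
    (hstrong : ∀ B : Set X, MeasurableSet B → μ B ≠ ∞ → 0 < μ B →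
      (C : ℝ≥0∞)⁻¹ * (μ B / ENNReal.ofReal (phi μ x₀ ((C : ℝ≥0∞) * μ B))) ≤
        μ (hBdry B 2))
    (hA : MeasurableSet A) (hAfin : μ A ≠ ∞) (hAc : Aᶜ.Nonempty)
    (hpos : ∀ (x : X) (r : ℝ), 0 < r → 0 < μ (Metric.ball x r))
    {t : ℝ≥0∞}
    (hne : {r : ℝ | 0 < r ∧ (C:ℝ≥0∞)*t ≤ μ (Metric.ball x₀ r)}.Nonempty)
    (hcomp : ∀ a ∈ A, μ (comp A a) ≤ t) :
    (C : ℝ≥0∞)⁻¹ * (μ A / ENNReal.ofReal (phi μ x₀ ((C:ℝ≥0∞) * t))) ≤ μ (hBdry A 2) := by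
  choose rep hrepA hrep using comps_rep (A := A)
  haveI : Countable (comps A) :=
    Set.countable_coe_iff.mpr (comps_countable (μ := μ) hA hpos)
  set rhat : ℝ≥0∞ := ENNReal.ofReal (phi μ x₀ ((C:ℝ≥0∞) * t)) with hrhat
  have hPmeas : ∀ P : comps A, MeasurableSet (↑P : Set X) := by
    intro P; rw [← hrep P]; exact comp_meas hA _
  have hPsubA : ∀ P : comps A, (↑P : Set X) ⊆ A := by
    intro P; rw [← hrep P]; exact comp_subset (hrepA P)
  have hμA : μ A = ∑' P : comps A, μ (↑P : Set X) := by
    conv_lhs => rw [← comps_cover (A := A)]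
    exact measure_iUnion comps_disjoint hPmeas
  -- termwise bound
  have hterm : ∀ P : comps A,
      (C:ℝ≥0∞)⁻¹ * (μ (↑P : Set X) / rhat) ≤ μ (hBdry (↑P : Set X) 2) := by
    intro P
    rcases eq_or_ne (μ (↑P : Set X)) 0 with h0 | h0
    · simp [h0]
    · have hPfin : μ (↑P : Set X) ≠ ∞ :=
        ne_top_of_le_ne_top hAfin (measure_mono (hPsubA P))
      have hPpos : 0 < μ (↑P : Set X) := pos_iff_ne_zero.mpr h0
      have hst := hstrong (↑P) (hPmeas P) hPfin hPpos
      refine le_trans ?_ hst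
      refine mul_le_mul_right ?_ _
      refine ENNReal.div_le_div_left ?_ _
      refine ENNReal.ofReal_le_ofReal ?_
      -- phi (C μP) ≤ phi (C t)
      refine csInf_le_csInf ?_ hne ?_
      · exact ⟨0, fun r hr => hr.1.le⟩
      · rintro r ⟨hr1, hr2⟩
        refine ⟨hr1, le_trans ?_ hr2⟩
        refine mul_le_mul_right ?_ _
        exact le_trans (le_of_eq (by rw [hrep P])) (hcomp (rep P) (hrepA P))
  -- sum of boundaries
  have hbsum : ∑' P : comps A, μ (hBdry (↑P : Set X) 2) ≤ μ (hBdry A 2) := by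
    have hdisjb : Pairwise (Function.onFun Disjoint fun (P : comps A) => hBdry (↑P : Set X) 2) := by
      intro P Q hPQ
      have hne' : comp A (rep P) ≠ comp A (rep Q) := by
        rw [hrep P, hrep Q]
        exact fun h => hPQ (Subtype.ext h)
      have h2 := bdry_comp_disjoint (hrepA P) (hrepA Q) hne'
      show Disjoint (hBdry (↑P : Set X) 2) (hBdry (↑Q : Set X) 2)
      rwa [← hrep P, ← hrep Q]
    rw [← measure_iUnion hdisjb (fun P => hBdry_meas _ _)]
    refine measure_mono (Set.iUnion_subset ?_)
    intro P
    rw [← hrep P]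
    exact bdry_comp_subset (hrepA P) hAc
  calc (C:ℝ≥0∞)⁻¹ * (μ A / rhat)
      = ∑' P : comps A, (C:ℝ≥0∞)⁻¹ * (μ (↑P : Set X) / rhat) := by
        rw [hμA]
        simp only [div_eq_mul_inv]
        rw [← ENNReal.tsum_mul_right, ← ENNReal.tsum_mul_left]
    _ ≤ ∑' P : comps A, μ (hBdry (↑P : Set X) 2) := ENNReal.tsum_le_tsum hterm
    _ ≤ μ (hBdry A 2) := hbsum

end comps

end IsoProof
namespace IsoProof

variable {X : Type*} [MetricSpace X] [MeasurableSpace X] [BorelSpace X] {μ : Measure X}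

lemma connProfile_le {t : ℝ≥0∞} {K : Set X} (h1 : MeasurableSet K)
    (h2 : MConn K) (h3 : μ K ≠ ∞) (h4 : t ≤ μ K) :
    connProfile μ 2 t ≤ μ (hBdry K 2) := by
  refine iInf_le_of_le K ?_
  exact iInf_le_of_le h1 (iInf_le_of_le h2 (iInf_le_of_le h3 (iInf_le _ h4)))

lemma le_profile_mul {t s : ℝ≥0∞} {C₁ : ℝ≥0} (hC₁ : C₁ ≠ 0)
    (h : ∀ A : Set X, MeasurableSet A → μ A ≠ ∞ → s ≤ μ A →
      connProfile μ 2 t ≤ (C₁:ℝ≥0∞) * μ (hBdry A 2)) :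
    connProfile μ 2 t ≤ (C₁:ℝ≥0∞) * profile μ 2 s := by
  have hC₁' : (C₁:ℝ≥0∞) ≠ 0 := by exact_mod_cast hC₁
  rcases eq_or_ne (profile μ 2 s) ∞ with hp | hp
  · rw [hp, ENNReal.mul_top hC₁']
    exact le_top
  refine ENNReal.le_of_forall_pos_le_add ?_
  intro ε hε _
  set δ : ℝ≥0∞ := (C₁:ℝ≥0∞)⁻¹ * ε with hδ
  have hδ0 : δ ≠ 0 := by
    refine mul_ne_zero (ENNReal.inv_ne_zero.mpr ENNReal.coe_ne_top) ?_
    exact_mod_cast hε.ne'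
  have key : ∃ A : Set X, MeasurableSet A ∧ μ A ≠ ∞ ∧ s ≤ μ A ∧
      μ (hBdry A 2) ≤ profile μ 2 s + δ := by
    by_contra hcon
    push_neg at hcon
    have hle : profile μ 2 s + δ ≤ profile μ 2 s := by
      conv_rhs => rw [profile]
      refine le_iInf fun A => le_iInf fun hA => le_iInf fun hfin => le_iInf fun hs => ?_
      exact (hcon A hA hfin hs).le
    have hlt : profile μ 2 s < profile μ 2 s + δ := ENNReal.lt_add_right hp hδ0
    exact absurd hle (not_le.mpr hlt)
  obtain ⟨A, hA, hfin, hs, hle⟩ := key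
  refine le_trans (h A hA hfin hs) ?_
  calc (C₁:ℝ≥0∞) * μ (hBdry A 2) ≤ (C₁:ℝ≥0∞) * (profile μ 2 s + δ) :=
        mul_le_mul_right hle _
    _ = (C₁:ℝ≥0∞) * profile μ 2 s + (C₁:ℝ≥0∞) * δ := by rw [mul_add]
    _ = (C₁:ℝ≥0∞) * profile μ 2 s + ε := by
        rw [hδ, ← mul_assoc, ENNReal.mul_inv_cancel hC₁' ENNReal.coe_ne_top, one_mul]

lemma hBdry_univ : hBdry (Set.univ : Set X) 2 = Set.univ := by
  refine subset_antisymm (Set.subset_univ _) ?_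
  intro x _
  constructor
  · show Metric.infDist x Set.univ ≤ 2
    refine le_trans (Metric.infDist_le_dist_of_mem (Set.mem_univ x)) ?_
    simp
  · show Metric.infDist x (Set.univ : Set X)ᶜ ≤ 2
    rw [Set.compl_univ, Metric.infDist_empty]
    norm_num

lemma mconn_univ {b : ℝ} (hconn : UnifConn X b) (hb10 : b < 10) (z₀ : X) :
    MConn (Set.univ : Set X) := by
  refine mconn_of_chains (Set.mem_univ z₀) ?_
  intro y _
  rcases eq_or_ne y z₀ with rfl | hne
  · exact ⟨0, fun _ => y, rfl, rfl, by omega, fun _ _ => Set.mem_univ _⟩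
  · obtain ⟨E₂, _, hspec⟩ := hconn (dist y z₀) (dist_pos.mpr hne)
    obtain ⟨n, c, h0, hn', hj, _⟩ := hspec y z₀ le_rfl
    exact ⟨n, c, h0, hn', fun i hi => lt_of_le_of_lt (hj i hi) hb10,
      fun i _ => Set.mem_univ _⟩

lemma profile_top : profile μ 2 ∞ = ∞ := by
  refine le_antisymm le_top ?_
  refine le_iInf fun A => le_iInf fun hA => le_iInf fun hfin => le_iInf fun hs => ?_
  exact absurd (top_le_iff.mp hs) hfin

lemma balls_infinite {CD : ℝ≥0}
    (hD : ∀ (x : X) (r : ℝ), 0 < r → μ (Metric.ball x (2*r)) ≤ (CD:ℝ≥0∞) * μ (Metric.ball x r))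
    {x₀ : X} (h1 : μ (Metric.ball x₀ 1) = ∞) :
    ∀ r : ℝ, 0 < r → μ (Metric.ball x₀ r) = ∞ := by
  intro r hr
  rcases le_or_gt 1 r with h | h
  · refine top_le_iff.mp ?_
    rw [← h1]
    exact measure_mono (Metric.ball_subset_ball h)
  · obtain ⟨k, hk⟩ := pow_unbounded_of_one_lt (1/r) (by norm_num : (1:ℝ) < 2)
    have h2 : (1:ℝ) ≤ 2^k * r := by
      rw [div_lt_iff₀ hr] at hk
      linarith
    have h3 : μ (Metric.ball x₀ (2^k*r)) = ∞ := by
      refine top_le_iff.mp ?_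
      rw [← h1]
      exact measure_mono (Metric.ball_subset_ball h2)
    have h4 := doub_pow hD k x₀ hr
    rw [h3] at h4
    by_contra hcon
    exact (ENNReal.mul_ne_top (by simp) hcon) (top_le_iff.mp h4)

lemma profile_infinite {x₀ : X} {C : ℝ≥0}
    (hstrong : ∀ B : Set X, MeasurableSet B → μ B ≠ ∞ → 0 < μ B →
      (C : ℝ≥0∞)⁻¹ * (μ B / ENNReal.ofReal (phi μ x₀ ((C : ℝ≥0∞) * μ B))) ≤
        μ (hBdry B 2))
    (hinf : ∀ r : ℝ, 0 < r → μ (Metric.ball x₀ r) = ∞) {s : ℝ≥0∞} (hs : s ≠ 0) :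
    profile μ 2 s = ∞ := by
  refine le_antisymm le_top ?_
  refine le_iInf fun A => le_iInf fun hA => le_iInf fun hfin => le_iInf fun hsle => ?_
  have hA0 : 0 < μ A := lt_of_lt_of_le (pos_iff_ne_zero.mpr hs) hsle
  have hphi : phi μ x₀ ((C:ℝ≥0∞) * μ A) = 0 := by
    have hset : {r : ℝ | 0 < r ∧ (C:ℝ≥0∞) * μ A ≤ μ (Metric.ball x₀ r)} = Set.Ioi 0 := by
      ext r
      simp only [Set.mem_setOf_eq, Set.mem_Ioi]
      constructor
      · exact fun h => h.1
      · intro h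
        exact ⟨h, by rw [hinf r h]; exact le_top⟩
    rw [phi, hset]
    exact csInf_Ioi
  have hst := hstrong A hA hfin hA0
  rw [hphi] at hst
  rw [ENNReal.ofReal_zero, ENNReal.div_zero hA0.ne'] at hst
  rwa [ENNReal.mul_top (ENNReal.inv_ne_zero.mpr ENNReal.coe_ne_top)] at hst

end IsoProof
open IsoProof

theorem strong_profile_implies_connected_sets_isoperimetric
    {X : Type*} [MetricSpace X] [MeasurableSpace X] [BorelSpace X]
    (μ : Measure X) [SigmaFinite μ]
    (hD : DoublingMeasure' μ) (hM : PropertyM X)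
    (b : ℝ) (hb : 0 < b) (hb4 : b ≤ 1 / 4) (hconn : UnifConn X b)
    (x₀ : X) (C : ℝ≥0) (hC : 1 ≤ C)
    (hstrong : ∀ A : Set X, MeasurableSet A → μ A ≠ ∞ → 0 < μ A →
      (C : ℝ≥0∞)⁻¹ * (μ A / ENNReal.ofReal (phi μ x₀ ((C : ℝ≥0∞) * μ A))) ≤
        μ (hBdry A 2)) :
    ∃ C₁ C₂ : ℝ≥0, 0 < C₁ ∧ 0 < C₂ ∧ ∀ t : ℝ≥0∞, 0 < t →
      connProfile μ 2 t ≤ (C₁ : ℝ≥0∞) * profile μ 2 ((C₂ : ℝ≥0∞) * t) := by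
  classical
  obtain ⟨CD₀, hCD₀pos, hDs0⟩ := hD
  obtain ⟨CM, hCM1, hpm⟩ := hM
  set CD : ℝ≥0 := max CD₀ 1 with hCDdef
  have hCD1 : (1:ℝ≥0) ≤ CD := le_max_right _ _
  have hCD0 : CD ≠ 0 := by
    intro h
    rw [h] at hCD1
    exact absurd hCD1 (by norm_num)
  have hDs : ∀ (x : X) (r : ℝ), 0 < r →
      μ (Metric.ball x (2*r)) ≤ (CD:ℝ≥0∞) * μ (Metric.ball x r) := by
    intro x r hr
    refine le_trans (hDs0 x r hr) (mul_le_mul_left ?_ _)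
    exact_mod_cast le_max_left _ _
  have hC0' : C ≠ 0 := by
    intro h
    rw [h] at hC
    exact absurd hC (by norm_num)
  have hC0 : (C:ℝ≥0∞) ≠ 0 := by exact_mod_cast hC0'
  have hCfin : (C:ℝ≥0∞) ≠ ∞ := ENNReal.coe_ne_top
  have hb10 : b < 10 := by linarith
  by_cases hbdd : ∃ R : ℝ, 1 ≤ R ∧ ∀ x : X, dist x₀ x < R
  · -- BOUNDED case
    obtain ⟨R, hR1, hRball⟩ := hbdd
    obtain ⟨k, hk⟩ := pow_unbounded_of_one_lt (2*R) (by norm_num : (1:ℝ) < 2)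
    have hCDk1 : (1:ℝ≥0) ≤ CD^k := one_le_pow₀ hCD1
    have hCDk0 : (CD^k : ℝ≥0) ≠ 0 := by
      intro h
      rw [h] at hCDk1
      exact absurd hCDk1 (by norm_num)
    have hCDk0' : ((CD^k : ℝ≥0) : ℝ≥0∞) ≠ 0 := by exact_mod_cast hCDk0
    have hCDk1' : (1:ℝ≥0∞) ≤ ((CD^k : ℝ≥0) : ℝ≥0∞) := by exact_mod_cast hCDk1
    refine ⟨CD^k, 1, lt_of_lt_of_le one_pos hCDk1, one_pos, ?_⟩
    intro t ht
    have h1t : ((1:ℝ≥0) : ℝ≥0∞) * t = t := by simp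
    rw [h1t]
    by_cases htop : t = ∞
    · rw [htop, profile_top, ENNReal.mul_top hCDk0']
      exact le_top
    by_cases hball1 : μ (Metric.ball x₀ 1) = ∞
    · rw [profile_infinite hstrong (balls_infinite hDs hball1) ht.ne',
        ENNReal.mul_top hCDk0']
      exact le_top
    have hfin : ∀ (x : X) (r : ℝ), μ (Metric.ball x r) ≠ ∞ := ball_fin hDs hball1
    refine le_profile_mul hCDk0 ?_
    intro A hA hAfin hsA
    have hμA0 : 0 < μ A := lt_of_lt_of_le ht hsA
    by_cases hAc0 : Aᶜ = ∅
    · have hAeq : A = Set.univ := Set.compl_empty_iff.mp hAc0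
      rw [hAeq] at hAfin hsA ⊢
      refine le_trans (connProfile_le MeasurableSet.univ (mconn_univ hconn hb10 x₀)
        hAfin hsA) ?_
      exact le_mul_of_one_le_left (zero_le ..) hCDk1'
    · have hAcne : Aᶜ.Nonempty := Set.nonempty_iff_ne_empty.mpr hAc0
      obtain ⟨a, ha⟩ : A.Nonempty := nonempty_of_measure_ne_zero hμA0.ne'
      obtain ⟨q, hq⟩ := hAcne
      obtain ⟨y, hy, hyd⟩ := exists_crossing hconn ha hq
      have hball := ball_sub_bdry hb hb4 hy hyd
      have hcov : (Set.univ : Set X) ⊆ Metric.ball y (2^k * 1) := by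
        intro x _
        have h1 : dist x y ≤ dist x x₀ + dist x₀ y := dist_triangle _ _ _
        have h2 : dist x x₀ < R := by rw [dist_comm]; exact hRball x
        have h3 : dist x₀ y < R := hRball y
        refine Metric.mem_ball.mpr ?_
        rw [mul_one]
        linarith
      have hunivfin : μ Set.univ ≠ ∞ :=
        ne_top_of_le_ne_top (hfin y (2^k*1)) (measure_mono hcov)
      have huniv_le : μ Set.univ ≤ ((CD^k : ℝ≥0) : ℝ≥0∞) * μ (hBdry A 2) := by
        calc μ Set.univ ≤ μ (Metric.ball y (2^k*1)) := measure_mono hcov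
          _ ≤ (CD:ℝ≥0∞)^k * μ (Metric.ball y 1) := doub_pow hDs k y one_pos
          _ ≤ (CD:ℝ≥0∞)^k * μ (hBdry A 2) := mul_le_mul_right (measure_mono hball) _
          _ = ((CD^k : ℝ≥0) : ℝ≥0∞) * μ (hBdry A 2) := by rw [ENNReal.coe_pow]
      refine le_trans (connProfile_le MeasurableSet.univ (mconn_univ hconn hb10 x₀)
        hunivfin (hsA.trans (measure_mono (Set.subset_univ A)))) ?_
      rw [hBdry_univ]
      exact huniv_le
  · -- UNBOUNDED case
    push_neg at hbdd
    have hunb : ∀ (z : X) (S : ℝ), ∃ w : X, S ≤ dist z w := by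
      intro z S
      obtain ⟨w, hw⟩ := hbdd (max 1 (S + dist x₀ z + 1)) (le_max_left _ _)
      refine ⟨w, ?_⟩
      have h1 : S + dist x₀ z + 1 ≤ dist x₀ w := le_trans (le_max_right _ _) hw
      have h2 : dist x₀ w ≤ dist x₀ z + dist z w := dist_triangle _ _ _
      linarith
    obtain ⟨Eg, hEgge, hEgspec⟩ := hconn (CM + 2) (by linarith)
    obtain ⟨E₅, hE₅ge, hE₅spec⟩ := hconn 5 (by norm_num)
    have hEg0 : 0 ≤ Eg := by linarith
    obtain ⟨k, hk⟩ := pow_unbounded_of_one_lt (2 + Eg + 4*E₅) (by norm_num : (1:ℝ) < 2)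
    set κ : ℝ≥0 := 2 * CD^k with hκdef
    set C₂ : ℝ≥0 := C + 1 with hC₂def
    set C₁ : ℝ≥0 := 1 + κ + κ * C + κ * C * C with hC₁def
    have hκ0 : κ ≠ 0 := by
      simp only [hκdef]
      positivity
    have hC₁1 : (1:ℝ≥0) ≤ C₁ := by
      simp only [hC₁def]
      exact le_add_of_le_of_nonneg (le_add_of_le_of_nonneg
        (le_add_of_le_of_nonneg le_rfl (zero_le ..)) (zero_le ..)) (zero_le ..)
    have hC₁0 : C₁ ≠ 0 := by
      intro h
      rw [h] at hC₁1
      exact absurd hC₁1 (by norm_num)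
    have hC₁0' : ((C₁:ℝ≥0):ℝ≥0∞) ≠ 0 := by exact_mod_cast hC₁0
    have hC₁1' : (1:ℝ≥0∞) ≤ ((C₁:ℝ≥0):ℝ≥0∞) := by exact_mod_cast hC₁1
    have hC₂1 : (1:ℝ≥0) ≤ C₂ := by
      simp only [hC₂def]
      exact le_add_of_nonneg_of_le (zero_le ..) le_rfl
    have hC₂1' : (1:ℝ≥0∞) ≤ ((C₂:ℝ≥0):ℝ≥0∞) := by exact_mod_cast hC₂1
    have hC₂0' : ((C₂:ℝ≥0):ℝ≥0∞) ≠ 0 := by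
      refine ne_of_gt (lt_of_lt_of_le one_pos ?_)
      exact_mod_cast hC₂1
    have hCC₂ : (C:ℝ≥0∞) < ((C₂:ℝ≥0):ℝ≥0∞) := by
      rw [ENNReal.coe_lt_coe, hC₂def]
      exact lt_add_of_pos_right C one_pos
    refine ⟨C₁, C₂, lt_of_lt_of_le one_pos hC₁1, lt_of_lt_of_le one_pos hC₂1, ?_⟩
    intro t ht
    by_cases htop : t = ∞
    · rw [htop, ENNReal.mul_top hC₂0', profile_top, ENNReal.mul_top hC₁0']
      exact le_top
    by_cases hball1 : μ (Metric.ball x₀ 1) = ∞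
    · rw [profile_infinite hstrong (balls_infinite hDs hball1)
        (mul_ne_zero hC₂0' ht.ne'), ENNReal.mul_top hC₁0']
      exact le_top
    have hfin : ∀ (x : X) (r : ℝ), μ (Metric.ball x r) ≠ ∞ := ball_fin hDs hball1
    refine le_profile_mul hC₁0 ?_
    intro A hA hAfin hsA
    have ht0 : t ≠ 0 := ht.ne'
    have htC₂ : t < ((C₂:ℝ≥0):ℝ≥0∞) * t := by
      conv_lhs => rw [← one_mul t]
      refine ENNReal.mul_lt_mul_left ht0 htop ?_
      exact lt_of_le_of_lt (show (1:ℝ≥0∞) ≤ (C:ℝ≥0∞) by exact_mod_cast hC) hCC₂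
    have hμA0 : 0 < μ A := lt_of_lt_of_le (lt_of_lt_of_le ht
      (le_mul_of_one_le_left (zero_le ..) hC₂1')) hsA
    have hXne0 : μ Set.univ ≠ 0 :=
      (lt_of_lt_of_le hμA0 (measure_mono (Set.subset_univ A))).ne'
    have hpos := ball_pos hDs hXne0
    have hCt0 : (C:ℝ≥0∞) * t ≠ 0 := mul_ne_zero hC0 ht0
    have hCtfin : (C:ℝ≥0∞) * t ≠ ∞ := ENNReal.mul_ne_top hCfin htop
    have hCt_lt_A : (C:ℝ≥0∞) * t < μ A := by
      refine lt_of_lt_of_le ?_ hsA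
      exact ENNReal.mul_lt_mul_left ht0 htop hCC₂
    have hCtuniv : (C:ℝ≥0∞) * t < μ Set.univ :=
      lt_of_lt_of_le hCt_lt_A (measure_mono (Set.subset_univ A))
    have hne : {r : ℝ | 0 < r ∧ (C:ℝ≥0∞)*t ≤ μ (Metric.ball x₀ r)}.Nonempty := by
      rw [measure_univ_sup x₀] at hCtuniv
      obtain ⟨n, hn⟩ := lt_iSup_iff.mp hCtuniv
      have hn0 : (0:ℝ) < n := by
        by_contra hcon
        push_neg at hcon
        rw [Metric.ball_eq_empty.mpr hcon, measure_empty] at hn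
        exact absurd hn (not_lt.mpr (zero_le ..))
      exact ⟨n, hn0, hn.le⟩
    by_cases hAc0 : Aᶜ = ∅
    · have hAeq : A = Set.univ := Set.compl_empty_iff.mp hAc0
      rw [hAeq] at hAfin hsA ⊢
      refine le_trans (connProfile_le MeasurableSet.univ (mconn_univ hconn hb10 x₀)
        hAfin (le_trans (le_mul_of_one_le_left (zero_le ..) hC₂1') hsA)) ?_
      exact le_mul_of_one_le_left (zero_le ..) hC₁1'
    have hAcne : Aᶜ.Nonempty := Set.nonempty_iff_ne_empty.mpr hAc0
    obtain ⟨a, ha⟩ : A.Nonempty := nonempty_of_measure_ne_zero hμA0.ne'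
    by_cases hbigcomp : ∃ a' ∈ A, t ≤ μ (comp A a')
    · obtain ⟨a', ha', hta'⟩ := hbigcomp
      refine le_trans (connProfile_le (comp_meas hA a') (mconn_comp a')
        (ne_top_of_le_ne_top hAfin (measure_mono (comp_subset ha'))) hta') ?_
      refine le_trans (measure_mono (bdry_comp_subset ha' hAcne)) ?_
      exact le_mul_of_one_le_left (zero_le ..) hC₁1'
    push_neg at hbigcomp
    have hcomple : ∀ a' ∈ A, μ (comp A a') ≤ t := fun a' ha' => (hbigcomp a' ha').le
    have hL1 := L1_bound hCfin hstrong hA hAfin hAcne hpos hne hcomple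
    set rhat := ENNReal.ofReal (phi μ x₀ ((C:ℝ≥0∞)*t)) with hrhatdef
    have hkey : t / rhat ≤ (C:ℝ≥0∞) * μ (hBdry A 2) := by
      have h1 : t / rhat ≤ μ A / rhat := by
        refine ENNReal.div_le_div_right ?_ _
        exact le_trans (le_mul_of_one_le_left (zero_le ..) hC₂1') hsA
      have h2 : (C:ℝ≥0∞)⁻¹ * (t/rhat) ≤ μ (hBdry A 2) :=
        le_trans (mul_le_mul_right h1 _) hL1
      calc t / rhat = (C:ℝ≥0∞) * ((C:ℝ≥0∞)⁻¹ * (t/rhat)) := by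
            rw [← mul_assoc, ENNReal.mul_inv_cancel hC0 hCfin, one_mul]
        _ ≤ (C:ℝ≥0∞) * μ (hBdry A 2) := mul_le_mul_right h2 _
    have hκcoe : ((κ:ℝ≥0):ℝ≥0∞) = 2 * (CD:ℝ≥0∞)^k := by
      simp only [hκdef]
      push_cast
      ring
    have hκC₁ : ((κ:ℝ≥0):ℝ≥0∞) ≤ ((C₁:ℝ≥0):ℝ≥0∞) := by
      refine ENNReal.coe_le_coe.mpr ?_
      simp only [hC₁def]
      calc κ ≤ 1 + κ := le_add_self
        _ ≤ 1 + κ + κ*C := le_add_of_le_of_nonneg le_rfl (zero_le ..)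
        _ ≤ 1 + κ + κ*C + κ*C*C := le_add_of_le_of_nonneg le_rfl (zero_le ..)
    have hκCC₁ : ((κ:ℝ≥0):ℝ≥0∞) * (C:ℝ≥0∞) ≤ ((C₁:ℝ≥0):ℝ≥0∞) := by
      rw [← ENNReal.coe_mul]
      refine ENNReal.coe_le_coe.mpr ?_
      simp only [hC₁def]
      calc κ * C ≤ (1 + κ) + κ*C := le_add_self
        _ ≤ 1 + κ + κ*C + κ*C*C := le_add_of_le_of_nonneg le_rfl (zero_le ..)
    have hκCCC₁ : ((κ:ℝ≥0):ℝ≥0∞) * (C:ℝ≥0∞) * (C:ℝ≥0∞) ≤ ((C₁:ℝ≥0):ℝ≥0∞) := by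
      rw [← ENNReal.coe_mul, ← ENNReal.coe_mul]
      refine ENNReal.coe_le_coe.mpr ?_
      simp only [hC₁def]
      exact le_add_self
    by_cases hφ1 : 1 ≤ phi μ x₀ ((C:ℝ≥0∞)*t)
    · -- shells centered at x₀
      have hbddφ : BddBelow {r : ℝ | 0 < r ∧ (C:ℝ≥0∞)*t ≤ μ (Metric.ball x₀ r)} :=
        ⟨0, fun r hr => hr.1.le⟩
      have hτ' : ∀ ρ' : ℝ, phi μ x₀ ((C:ℝ≥0∞)*t) < ρ' →
          (C:ℝ≥0∞)*t ≤ μ (Metric.ball x₀ ρ') := by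
        intro ρ' hρ'
        rw [phi] at hρ'
        obtain ⟨r₀, hr₀, hr₀'⟩ := (csInf_lt_iff hbddφ hne).mp hρ'
        exact le_trans hr₀.2 (measure_mono (Metric.ball_subset_ball hr₀'.le))
      have hτ : ∀ ρ' : ℝ, phi μ x₀ ((C:ℝ≥0∞)*t) < ρ' → t ≤ μ (Metric.ball x₀ ρ') :=
        fun ρ' h => le_trans (le_mul_of_one_le_left (zero_le ..)
          (by exact_mod_cast hC)) (hτ' ρ' h)
      have hT : μ (Metric.ball x₀ (phi μ x₀ ((C:ℝ≥0∞)*t))) ≤ (C:ℝ≥0∞)*t := by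
        refine measure_ball_le_of_lt (by linarith) ?_
        intro r' hr'0 hr'lt
        by_contra hcon
        push_neg at hcon
        have hmem : r' ∈ {r : ℝ | 0 < r ∧ (C:ℝ≥0∞)*t ≤ μ (Metric.ball x₀ r)} :=
          ⟨hr'0, hcon.le⟩
        have := csInf_le hbddφ hmem
        rw [← phi] at this
        linarith
      obtain ⟨K, hK1, hK2, hK3, hK4, hK5⟩ := shell_lemma hb hb4 hCM1 hpm hEgspec hEg0
        hE₅spec hE₅ge hDs hCD0 hfin hunb hk.le x₀ hφ1 t ((C:ℝ≥0∞)*t) hCt0 hCtfin hτ hT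
      refine le_trans (connProfile_le hK1 hK2 hK3 hK4) (le_trans hK5 ?_)
      have heq : 2*(CD:ℝ≥0∞)^k * ((C:ℝ≥0∞)*t) / ENNReal.ofReal (phi μ x₀ ((C:ℝ≥0∞)*t))
          = (2*(CD:ℝ≥0∞)^k * (C:ℝ≥0∞)) * (t / rhat) := by
        rw [hrhatdef]
        simp only [div_eq_mul_inv]
        ring
      rw [heq]
      refine le_trans (mul_le_mul_right hkey _) ?_
      rw [← mul_assoc]
      refine mul_le_mul_left ?_ _
      calc 2*(CD:ℝ≥0∞)^k * (C:ℝ≥0∞) * (C:ℝ≥0∞)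
          = ((κ:ℝ≥0):ℝ≥0∞) * (C:ℝ≥0∞) * (C:ℝ≥0∞) := by rw [hκcoe]
        _ ≤ ((C₁:ℝ≥0):ℝ≥0∞) := hκCCC₁
    · -- local shells near the set A
      push_neg at hφ1
      have hrhat1 : rhat ≤ 1 := by
        rw [hrhatdef]
        refine le_trans (ENNReal.ofReal_le_ofReal hφ1.le) ?_
        simp
      have hkey2 : t ≤ (C:ℝ≥0∞) * μ (hBdry A 2) := by
        refine le_trans ?_ hkey
        calc t = t / 1 := (div_one t).symm
          _ ≤ t / rhat := ENNReal.div_le_div_left hrhat1 t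
      obtain ⟨q, hq⟩ := id hAcne
      have hqP : q ∉ comp A a := fun h => hq (comp_subset ha h)
      obtain ⟨y, hy, hyd⟩ := exists_crossing hconn (mem_comp_self a) hqP
      have hballP : Metric.ball y 1 ⊆ hBdry A 2 :=
        (ball_sub_bdry hb hb4 hy hyd).trans (bdry_comp_subset ha hAcne)
      have hyA : μ (Metric.ball y 1) ≤ μ (hBdry A 2) := measure_mono hballP
      by_cases hyt : t ≤ μ (Metric.ball y 1)
      · have hτy : ∀ ρ' : ℝ, (1:ℝ) < ρ' → t ≤ μ (Metric.ball y ρ') :=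
          fun ρ' h => le_trans hyt (measure_mono (Metric.ball_subset_ball h.le))
        obtain ⟨K, hK1, hK2, hK3, hK4, hK5⟩ := shell_lemma hb hb4 hCM1 hpm hEgspec hEg0
          hE₅spec hE₅ge hDs hCD0 hfin hunb hk.le y le_rfl t (μ (Metric.ball y 1))
          (hpos y one_pos).ne' (hfin y 1) hτy le_rfl
        refine le_trans (connProfile_le hK1 hK2 hK3 hK4) (le_trans hK5 ?_)
        rw [ENNReal.ofReal_one, div_one]
        calc 2*(CD:ℝ≥0∞)^k * μ (Metric.ball y 1)
            ≤ 2*(CD:ℝ≥0∞)^k * μ (hBdry A 2) := mul_le_mul_right hyA _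
          _ = ((κ:ℝ≥0):ℝ≥0∞) * μ (hBdry A 2) := by rw [hκcoe]
          _ ≤ ((C₁:ℝ≥0):ℝ≥0∞) * μ (hBdry A 2) := mul_le_mul_left hκC₁ _
      · push_neg at hyt
        have hsyne : {r : ℝ | 0 < r ∧ t ≤ μ (Metric.ball y r)}.Nonempty := by
          have htuniv : t < μ Set.univ := lt_of_lt_of_le (lt_of_lt_of_le htC₂ hsA)
            (measure_mono (Set.subset_univ A))
          rw [measure_univ_sup y] at htuniv
          obtain ⟨n, hn⟩ := lt_iSup_iff.mp htuniv
          have hn0 : (0:ℝ) < n := by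
            by_contra hcon
            push_neg at hcon
            rw [Metric.ball_eq_empty.mpr hcon, measure_empty] at hn
            exact absurd hn (not_lt.mpr (zero_le ..))
          exact ⟨n, hn0, hn.le⟩
        have hbddsy : BddBelow {r : ℝ | 0 < r ∧ t ≤ μ (Metric.ball y r)} :=
          ⟨0, fun r hr => hr.1.le⟩
        set R' := sInf {r : ℝ | 0 < r ∧ t ≤ μ (Metric.ball y r)} with hR'def
        have hR1 : 1 ≤ R' := by
          refine le_csInf hsyne ?_
          rintro r ⟨hr0, hrt⟩
          by_contra hcon
          push_neg at hcon
          have := measure_mono (Metric.ball_subset_ball hcon.le) (μ := μ)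
            (s := Metric.ball y r)
          exact absurd (le_trans hrt this) (not_le.mpr hyt)
        have hτy : ∀ ρ' : ℝ, R' < ρ' → t ≤ μ (Metric.ball y ρ') := by
          intro ρ' hρ'
          obtain ⟨r₀, hr₀, hr₀'⟩ := (csInf_lt_iff hbddsy hsyne).mp hρ'
          exact le_trans hr₀.2 (measure_mono (Metric.ball_subset_ball hr₀'.le))
        have hT : μ (Metric.ball y R') ≤ t := by
          refine measure_ball_le_of_lt (lt_of_lt_of_le one_pos hR1) ?_
          intro r' hr'0 hr'lt
          by_contra hcon
          push_neg at hcon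
          have hmem : r' ∈ {r : ℝ | 0 < r ∧ t ≤ μ (Metric.ball y r)} := ⟨hr'0, hcon.le⟩
          have := csInf_le hbddsy hmem
          rw [← hR'def] at this
          linarith
        obtain ⟨K, hK1, hK2, hK3, hK4, hK5⟩ := shell_lemma hb hb4 hCM1 hpm hEgspec hEg0
          hE₅spec hE₅ge hDs hCD0 hfin hunb hk.le y hR1 t t ht0 htop hτy hT
        refine le_trans (connProfile_le hK1 hK2 hK3 hK4) (le_trans hK5 ?_)
        have h1 : 2*(CD:ℝ≥0∞)^k * t / ENNReal.ofReal R' ≤ 2*(CD:ℝ≥0∞)^k * t := by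
          have hR'1 : (1:ℝ≥0∞) ≤ ENNReal.ofReal R' := by
            rw [← ENNReal.ofReal_one]
            exact ENNReal.ofReal_le_ofReal hR1
          calc 2*(CD:ℝ≥0∞)^k * t / ENNReal.ofReal R'
              ≤ 2*(CD:ℝ≥0∞)^k * t / 1 := ENNReal.div_le_div_left hR'1 _
            _ = 2*(CD:ℝ≥0∞)^k * t := div_one _
        refine le_trans h1 ?_
        calc 2*(CD:ℝ≥0∞)^k * t ≤ 2*(CD:ℝ≥0∞)^k * ((C:ℝ≥0∞) * μ (hBdry A 2)) :=
              mul_le_mul_right hkey2 _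
          _ = (((κ:ℝ≥0):ℝ≥0∞) * (C:ℝ≥0∞)) * μ (hBdry A 2) := by rw [hκcoe]; ring
          _ ≤ ((C₁:ℝ≥0):ℝ≥0∞) * μ (hBdry A 2) := mul_le_mul_left hκCC₁ _
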